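/- Let G be a locally compact group, X and Ξ G-spaces with G-invariant measures, Y a separable Hilbert space with a unitary representation μ : G → U(Y), and ψ : X × Ξ → Y a joint-G-equivariant feature map. Define the ridgelet transform R_ψ[f](ξ) := ∫_X ⟨f(x), ψ(x,ξ)⟩_Y dx for f : X → Y, the representation π_g[f](x) := μ_g(f(g⁻¹·x)) on L²(X;Y), and the representation π̂_g[γ](ξ) := γ(g⁻¹·ξ) on L²(Ξ). Then R_ψ intertwines π and π̂: for every g ∈ G and f for which the integrals are defined, R_ψ[π_g[f]] = π̂_g[R_ψ[f]]. -/

import Mathlib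

open MeasureTheory

/- Substituting `x = g • y`, which preserves `μX`, turns `⟨ρ_g f(g⁻¹ • x), ψ(x, ξ)⟩` into
`⟨ρ_g f(y), ψ(g • y, ξ)⟩ = ⟨ρ_g f(y), ρ_g ψ(y, g⁻¹ • ξ)⟩`, and `ρ_g` is unitary. -/

theorem MeasureTheory.integral_comp_smul_of_measurePreserving
    {G α E : Type*} [Group G] [MeasurableSpace α] [MulAction G α]
    [NormedAddCommGroup E] [NormedSpace ℝ E] {μ : Measure α}
    (hμ : ∀ g : G, MeasurePreserving (fun x : α => g • x) μ μ) (F : α → E) (g : G) :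
    ∫ x, F (g • x) ∂μ = ∫ x, F x ∂μ :=
  haveI : MeasurableConstSMul G α := ⟨fun c => (hμ c).measurable⟩
  haveI : SMulInvariantMeasure G α μ :=
    ⟨fun c _ hs => (hμ c).measure_preimage hs.nullMeasurableSet⟩
  integral_smul_eq_self F

theorem statement5_general
    {G X Ξ Y : Type*} [Group G]
    [MeasurableSpace X] [MulAction G X]
    [MulAction G Ξ]
    (μX : Measure X)
    (hμX : ∀ g : G, MeasurePreserving (fun x : X => g • x) μX μX)
    [NormedAddCommGroup Y] [InnerProductSpace ℂ Y]
    (ρ : G →* (Y ≃ₗᵢ[ℂ] Y))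
    (ψ : X → Ξ → Y)
    (hψ : ∀ (g : G) (x : X) (ξ : Ξ), ψ (g • x) (g • ξ) = ρ g (ψ x ξ))
    (R : (X → Y) → Ξ → ℂ)
    (hR : ∀ (f : X → Y) (ξ : Ξ), R f ξ = ∫ x, (inner ℂ (f x) (ψ x ξ) : ℂ) ∂μX)
    (g : G) (f : X → Y) :
    ∀ ξ : Ξ, R (fun x => ρ g (f (g⁻¹ • x))) ξ = R f (g⁻¹ • ξ) := by
  intro ξ
  have hψ_smul : ∀ x, ψ (g • x) ξ = ρ g (ψ x (g⁻¹ • ξ)) := fun x => by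
    simpa using hψ g x (g⁻¹ • ξ)
  rw [hR, hR, ← integral_comp_smul_of_measurePreserving hμX _ g]
  congr 1 with x
  rw [inv_smul_smul, hψ_smul, LinearIsometryEquiv.inner_map_map]

/-- Let `G` be a locally compact group, `X` and `Ξ` `G`-spaces with
`G`-invariant measures, `Y` a separable Hilbert space with a unitary representation
`ρ : G → U(Y)`, and `ψ : X × Ξ → Y` a joint-`G`-equivariant feature map.  The ridgelet
transform `R_ψ[f](ξ) := ∫_X ⟨f(x), ψ(x,ξ)⟩_Y dx` intertwines
`π_g[f](x) = ρ_g (f (g⁻¹ • x))` and `π̂_g[γ](ξ) = γ(g⁻¹ • ξ)`: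
`R_ψ[π_g f] = π̂_g[R_ψ f]`. -/
theorem statement5
    {G X Ξ Y : Type*} [Group G] [TopologicalSpace G] [IsTopologicalGroup G]
    [LocallyCompactSpace G]
    [MeasurableSpace X] [MulAction G X]
    [MeasurableSpace Ξ] [MulAction G Ξ]
    (μX : Measure X) (μΞ : Measure Ξ)
    (hμX : ∀ g : G, MeasurePreserving (fun x : X => g • x) μX μX)
    (hμΞ : ∀ g : G, MeasurePreserving (fun ξ : Ξ => g • ξ) μΞ μΞ)
    [NormedAddCommGroup Y] [InnerProductSpace ℂ Y] [CompleteSpace Y]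
    [TopologicalSpace.SeparableSpace Y]
    (ρ : G →* (Y ≃ₗᵢ[ℂ] Y))
    (ψ : X → Ξ → Y)
    (hψ : ∀ (g : G) (x : X) (ξ : Ξ), ψ (g • x) (g • ξ) = ρ g (ψ x ξ))
    (R : (X → Y) → Ξ → ℂ)
    (hR : ∀ (f : X → Y) (ξ : Ξ), R f ξ = ∫ x, (inner ℂ (f x) (ψ x ξ) : ℂ) ∂μX)
    (g : G) (f : X → Y)
    (hint : ∀ ξ : Ξ, Integrable (fun x => (inner ℂ (f x) (ψ x ξ) : ℂ)) μX) :
    ∀ ξ : Ξ, R (fun x => ρ g (f (g⁻¹ • x))) ξ = R f (g⁻¹ • ξ) :=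
  statement5_general μX hμX ρ ψ hψ R hR g f
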